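/- Let V be a finite-dimensional real vector space and Q an anisotropic quadratic form on V. Let M be a finite-dimensional Cℓ(Q)-module and h a nondegenerate bilinear form on M. If S₊, S₋ ⊆ M are linear subspaces with dim S₊ + dim S₋ > dim M, then the only vector v ∈ V satisfying h(γ_v s, t) = 0 for all s ∈ S₊ and t ∈ S₋ is v = 0. (This is the algebraic core of Theorem 2.1 (v) in the two-Killing-number case: for definite metrics the bound (3/2)N can be relaxed to N.) -/

import Mathlib

/-!
Since `γ_v ∘ γ_v = Q(v) • id` and `Q` is anisotropic, `γ_v` is injective for `v ≠ 0`, so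
`γ_v S₊` has the dimension of `S₊`. The hypothesis says `S₋` lies in the `h`-orthogonal of
`γ_v S₊`, which for nondegenerate `h` has dimension `dim M - dim S₊`; this contradicts
`dim S₊ + dim S₋ > dim M`.
-/

/-- The Clifford multiplication `γ_v : s ↦ ι(v) • s` as an `ℝ`-linear endomorphism
of a `Cℓ(Q)`-module `M`. -/
noncomputable def gammaLin {V : Type*} [AddCommGroup V] [Module ℝ V]
    (Q : QuadraticForm ℝ V) {M : Type*} [AddCommGroup M] [Module ℝ M]
    [Module (CliffordAlgebra Q) M] [IsScalarTower ℝ (CliffordAlgebra Q) M]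
    (v : V) : M →ₗ[ℝ] M where
  toFun s := CliffordAlgebra.ι Q v • s
  map_add' s t := smul_add _ s t
  map_smul' r s := (smul_comm r (CliffordAlgebra.ι Q v) s).symm

namespace LinearMap.BilinForm

variable {K E : Type*} [Field K] [AddCommGroup E] [Module K E] [FiniteDimensional K E]

theorem finrank_add_finrank_le_of_forall_apply_eq_zero {B : LinearMap.BilinForm K E} (hB : B.Nondegenerate)
    {W T : Submodule K E} (hWT : ∀ w ∈ W, ∀ t ∈ T, B w t = 0) :
    Module.finrank K W + Module.finrank K T ≤ Module.finrank K E := by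
  have hT : Module.finrank K T ≤ Module.finrank K (B.orthogonal W) :=
    Submodule.finrank_mono fun t ht w hw => hWT w hw t ht
  rw [finrank_orthogonal hB] at hT
  have hW := Submodule.finrank_le W
  omega

end LinearMap.BilinForm

section Clifford

variable {V : Type*} [AddCommGroup V] [Module ℝ V] (Q : QuadraticForm ℝ V)
  {M : Type*} [AddCommGroup M] [Module ℝ M]
  [Module (CliffordAlgebra Q) M] [IsScalarTower ℝ (CliffordAlgebra Q) M]

theorem gammaLin_gammaLin (v : V) (s : M) : gammaLin Q v (gammaLin Q v s) = Q v • s := by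
  change CliffordAlgebra.ι Q v • CliffordAlgebra.ι Q v • s = Q v • s
  rw [smul_smul, CliffordAlgebra.ι_sq_scalar, algebraMap_smul]

theorem gammaLin_injective {v : V} (hv : Q v ≠ 0) :
    Function.Injective (gammaLin Q v : M →ₗ[ℝ] M) := by
  refine (injective_iff_map_eq_zero _).mpr fun s hs => ?_
  have hsq := gammaLin_gammaLin Q v s
  rw [hs, map_zero, eq_comm, smul_eq_zero] at hsq
  exact hsq.resolve_left hv

end Clifford

theorem killing_spinors_two_numbers_definite_general
    {V : Type*} [AddCommGroup V] [Module ℝ V]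
    (Q : QuadraticForm ℝ V) (hQ : Q.Anisotropic)
    {M : Type*} [AddCommGroup M] [Module ℝ M] [FiniteDimensional ℝ M]
    [Module (CliffordAlgebra Q) M] [IsScalarTower ℝ (CliffordAlgebra Q) M]
    (h : LinearMap.BilinForm ℝ M) (hh : h.Nondegenerate)
    (Splus Sminus : Submodule ℝ M)
    (hdim : Module.finrank ℝ M < Module.finrank ℝ Splus + Module.finrank ℝ Sminus)
    (v : V)
    (hv : ∀ s ∈ Splus, ∀ t ∈ Sminus, h (gammaLin Q v s) t = 0) :
    v = 0 := by
  by_contra hv0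
  have hinj : Function.Injective (gammaLin Q v : M →ₗ[ℝ] M) :=
    gammaLin_injective Q fun hQv => hv0 (hQ v hQv)
  have hrank : Module.finrank ℝ (Splus.map (gammaLin Q v)) = Module.finrank ℝ Splus :=
    (Splus.equivMapOfInjective _ hinj).finrank_eq.symm
  have hle := LinearMap.BilinForm.finrank_add_finrank_le_of_forall_apply_eq_zero hh
    (W := Splus.map (gammaLin Q v)) (T := Sminus) (by rintro _ ⟨s, hs, rfl⟩; exact hv s hs)
  omega

/-- For an anisotropic (definite) quadratic form `Q`, if `S₊, S₋` are subspaces of a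
Clifford module `M` with `dim S₊ + dim S₋ > dim M` and `h` is a nondegenerate bilinear
form on `M`, then the only vector `v` with `h(γ_v S₊, S₋) = 0` is `v = 0`. -/
theorem killing_spinors_two_numbers_definite
    {V : Type*} [AddCommGroup V] [Module ℝ V] [FiniteDimensional ℝ V]
    (Q : QuadraticForm ℝ V) (hQ : Q.Anisotropic)
    {M : Type*} [AddCommGroup M] [Module ℝ M] [FiniteDimensional ℝ M]
    [Module (CliffordAlgebra Q) M] [IsScalarTower ℝ (CliffordAlgebra Q) M]
    (h : LinearMap.BilinForm ℝ M) (hh : h.Nondegenerate)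
    (Splus Sminus : Submodule ℝ M)
    (hdim : Module.finrank ℝ M < Module.finrank ℝ Splus + Module.finrank ℝ Sminus)
    (v : V)
    (hv : ∀ s ∈ Splus, ∀ t ∈ Sminus, h (gammaLin Q v s) t = 0) :
    v = 0 :=
  killing_spinors_two_numbers_definite_general Q hQ h hh Splus Sminus hdim v hv
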